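/- arXiv:1801.01234 — 3 statements merged into one kernel-verified Lean document; each statement's English description precedes it below -/
import Mathlib

section
/- For a ∈ B_n \ {0} and any vector z ∈ ℂⁿ, the derivative of the Möbius automorphism φ_a at the point a applied to z satisfies |φ_a'(a) z| = sqrt((1-|a|²)|z|² + |⟨z,a⟩|²) / (1-|a|²). -/
/-!
Write `L_a = P_a + s_a Q_a`. Then `φ_a w = (1 - ⟨w, a⟩)⁻¹ • (a - L_a w)`, and the affine
factor `a - L_a w` vanishes at `w = a`, so the product rule gives
`φ_a'(a) = -(1 - |a|²)⁻¹ L_a`.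
Since `P_a z ⊥ Q_a z`, Pythagoras gives
`|L_a z|² = s_a² |z|² + (1 - s_a²) |P_a z|² = (1 - |a|²) |z|² + |⟨z, a⟩|²`.
-/

/-- The Möbius automorphism `φ_a` of the unit ball of `ℂⁿ`.
Here `inner a z = Σ conj (a j) * z j` corresponds to the paper's `⟨z, a⟩`. -/
noncomputable def phiMob {n : ℕ} (a z : EuclideanSpace ℂ (Fin n)) : EuclideanSpace ℂ (Fin n) :=
  (1 - (inner ℂ a z : ℂ))⁻¹ •
    (a - ((inner ℂ a z : ℂ) / (‖a‖ ^ 2 : ℂ)) • a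
       - ((Real.sqrt (1 - ‖a‖ ^ 2) : ℂ)) • (z - ((inner ℂ a z : ℂ) / (‖a‖ ^ 2 : ℂ)) • a))

open Submodule

theorem DifferentiableAt.hasFDerivAt_smul_of_eq_zero {𝕜 E F : Type*} [NontriviallyNormedField 𝕜]
    [NormedAddCommGroup E] [NormedSpace 𝕜 E] [NormedAddCommGroup F] [NormedSpace 𝕜 F]
    {c : E → 𝕜} {f : E → F} {f' : E →L[𝕜] F} {x : E}
    (hc : DifferentiableAt 𝕜 c x) (hf : HasFDerivAt f f' x) (hfx : f x = 0) :
    HasFDerivAt (fun y => c y • f y) (c x • f') x := by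
  simpa [hfx] using hc.hasFDerivAt.fun_smul hf

section Projection

variable {𝕜 E : Type*} [RCLike 𝕜] [NormedAddCommGroup E] [InnerProductSpace 𝕜 E]

theorem Submodule.norm_sq_starProjection_add_smul_sub (K : Submodule 𝕜 E)
    [K.HasOrthogonalProjection] (r : 𝕜) (w : E) :
    ‖K.starProjection w + r • (w - K.starProjection w)‖ ^ 2 =
      ‖r‖ ^ 2 * ‖w‖ ^ 2 + (1 - ‖r‖ ^ 2) * ‖K.starProjection w‖ ^ 2 := by
  have pythagoras {u v : E} (hu : u ∈ K) (hv : v ∈ Kᗮ) : ‖u + v‖ ^ 2 = ‖u‖ ^ 2 + ‖v‖ ^ 2 := by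
    simpa only [sq] using norm_add_sq_eq_norm_sq_add_norm_sq_of_inner_eq_zero u v
      (K.inner_right_of_mem_orthogonal hu hv)
  have hP := K.starProjection_apply_mem w
  have hQ := K.sub_starProjection_mem_orthogonal w
  have hw := pythagoras hP hQ
  rw [add_sub_cancel] at hw
  rw [pythagoras hP (Kᗮ.smul_mem r hQ), norm_smul, mul_pow]
  linear_combination -‖r‖ ^ 2 * hw

theorem norm_sq_mul_norm_sq_starProjection_singleton (v w : E) :
    ‖v‖ ^ 2 * ‖(𝕜 ∙ v).starProjection w‖ ^ 2 = ‖inner 𝕜 v w‖ ^ 2 := by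
  rcases eq_or_ne v 0 with rfl | hv
  · simp
  have : ‖v‖ ≠ 0 := norm_ne_zero_iff.2 hv
  rw [starProjection_singleton, norm_smul, norm_div, RCLike.norm_ofReal,
    abs_of_nonneg (by positivity)]
  field_simp

end Projection

section Mobius

variable {n : ℕ} (a : EuclideanSpace ℂ (Fin n))

/-- The map `L_a = P_a + s_a Q_a`, with `P_a` the orthogonal projection onto `ℂ a`. -/
noncomputable def phiMobLinear : EuclideanSpace ℂ (Fin n) →L[ℂ] EuclideanSpace ℂ (Fin n) :=
  (ℂ ∙ a).starProjection +
    (Real.sqrt (1 - ‖a‖ ^ 2) : ℂ) • (ContinuousLinearMap.id ℂ _ - (ℂ ∙ a).starProjection)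

theorem phiMob_eq : phiMob a = fun w => (1 - inner ℂ a w)⁻¹ • (a - phiMobLinear a w) := by
  ext1 w
  simp only [phiMob, phiMobLinear, add_apply, smul_apply, sub_apply,
    ContinuousLinearMap.id_apply, starProjection_singleton]
  push_cast
  congr 1
  abel

theorem phiMobLinear_self : phiMobLinear a a = a := by
  simp [phiMobLinear, starProjection_eq_self_iff.2 (mem_span_singleton_self a)]

theorem hasFDerivAt_phiMob (ha : ‖a‖ ≠ 1) :
    HasFDerivAt (phiMob a) (((1 - ‖a‖ ^ 2 : ℝ) : ℂ)⁻¹ • -phiMobLinear a) a := by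
  have hdenom : (1 : ℂ) - inner ℂ a a = ((1 - ‖a‖ ^ 2 : ℝ) : ℂ) := by
    rw [inner_self_eq_norm_sq_to_K]; push_cast; rfl
  have hne : (1 - ‖a‖ ^ 2 : ℝ) ≠ 0 := by
    intro h
    exact ha (by nlinarith [norm_nonneg a])
  have hc : DifferentiableAt ℂ (fun w => (1 - inner ℂ a w)⁻¹) a := by
    refine ((innerSL ℂ a).differentiableAt.const_sub 1).inv ?_
    simp only [innerSL_apply_apply, hdenom]
    exact_mod_cast hne
  have hf : HasFDerivAt (fun w => a - phiMobLinear a w) (-phiMobLinear a) a := by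
    simpa using (phiMobLinear a).hasFDerivAt.const_sub a
  rw [phiMob_eq]
  simpa [hdenom] using hc.hasFDerivAt_smul_of_eq_zero hf (by simp [phiMobLinear_self])

theorem norm_sq_phiMobLinear_apply (ha : ‖a‖ ≤ 1) (z : EuclideanSpace ℂ (Fin n)) :
    ‖phiMobLinear a z‖ ^ 2 = (1 - ‖a‖ ^ 2) * ‖z‖ ^ 2 + ‖inner ℂ a z‖ ^ 2 := by
  have hs : ‖(Real.sqrt (1 - ‖a‖ ^ 2) : ℂ)‖ ^ 2 = 1 - ‖a‖ ^ 2 := by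
    rw [Complex.norm_real, Real.norm_eq_abs, sq_abs, Real.sq_sqrt]
    nlinarith [norm_nonneg a]
  simp only [phiMobLinear, add_apply, smul_apply, sub_apply, ContinuousLinearMap.id_apply]
  rw [norm_sq_starProjection_add_smul_sub, hs, ← norm_sq_mul_norm_sq_starProjection_singleton]
  ring

end Mobius

theorem stmt1_general {n : ℕ} (a : EuclideanSpace ℂ (Fin n)) (ha : ‖a‖ < 1)
    (z : EuclideanSpace ℂ (Fin n)) :
    ‖fderiv ℂ (phiMob a) a z‖ =
      Real.sqrt ((1 - ‖a‖ ^ 2) * ‖z‖ ^ 2 + ‖(inner ℂ a z : ℂ)‖ ^ 2) / (1 - ‖a‖ ^ 2) := by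
  have hpos : 0 < 1 - ‖a‖ ^ 2 := by nlinarith [norm_nonneg a]
  rw [(hasFDerivAt_phiMob a ha.ne).fderiv, ← norm_sq_phiMobLinear_apply a ha.le,
    Real.sqrt_sq (norm_nonneg _), smul_apply, norm_smul, norm_inv,
    Complex.norm_real, Real.norm_of_nonneg hpos.le, neg_apply, norm_neg,
    inv_mul_eq_div]

theorem stmt1 {n : ℕ} (a : EuclideanSpace ℂ (Fin n)) (ha : ‖a‖ < 1) (ha0 : a ≠ 0)
    (z : EuclideanSpace ℂ (Fin n)) :
    ‖fderiv ℂ (phiMob a) a z‖ =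
      Real.sqrt ((1 - ‖a‖ ^ 2) * ‖z‖ ^ 2 + ‖(inner ℂ a z : ℂ)‖ ^ 2) / (1 - ‖a‖ ^ 2) :=
  stmt1_general a ha z
end

section
/- Let 0 < r < 1, 0 < s < 1 and let f be holomorphic on B_n. Then for all z with |z| ≤ s, |f(z) - f(rz)| ≤ (2n(1-r)/(1-s)) · max_{|w| ≤ (1+s)/2} |f(w)|. -/
/-!
Restrict `f` to the complex line through `z`: `g t = f (t • z)` is holomorphic for
`‖t‖ ≤ (1 + s) / (2s)`, where it is bounded by the maximum `C` of `|f|` on the ball of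
radius `(1 + s) / 2`. Every point of the segment `[r, 1]` is the centre of a disc of radius
`(1 - s) / (2s)` inside that region, so Cauchy's estimate bounds `|g'|` there by
`2sC / (1 - s)`, and the mean value inequality along the segment gives
`|f z - f (r z)| ≤ 2s(1 - r)C / (1 - s)`, which is at most the claimed bound once `n ≥ 1`.
-/

open Metric Set

variable {E F : Type*} [NormedAddCommGroup E] [NormedSpace ℂ E]
  [NormedAddCommGroup F] [NormedSpace ℂ F]

theorem norm_sub_le_of_differentiableOn_of_closedBall_subset {g : ℂ → F} {K : Set ℂ}
    {x y : ℂ} {δ C : ℝ} (hδ : 0 < δ) (hK : ∀ t ∈ segment ℝ x y, closedBall t δ ⊆ K)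
    (hg : DifferentiableOn ℂ g K) (hC : ∀ w ∈ K, ‖g w‖ ≤ C) :
    ‖g y - g x‖ ≤ C / δ * ‖y - x‖ := by
  refine (convex_segment x y).norm_image_sub_le_of_norm_deriv_le (fun t ht => ?_)
    (fun t ht => ?_) (left_mem_segment ℝ x y) (right_mem_segment ℝ x y)
  · exact (hg.mono (hK t ht)).differentiableAt (closedBall_mem_nhds t hδ)
  · exact Complex.norm_deriv_le_of_forall_mem_sphere_norm_le hδ (hg.diffContOnCl_ball (hK t ht))
      fun w hw => hC w (hK t ht (sphere_subset_closedBall hw))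

theorem norm_sub_smul_le_of_differentiableOn_closedBall {f : E → F} {ρ s C : ℝ}
    (hs : 0 < s) (hsρ : s < ρ) (hf : DifferentiableOn ℂ f (closedBall 0 ρ))
    (hC : ∀ w ∈ closedBall (0 : E) ρ, ‖f w‖ ≤ C) {z : E} (hz : ‖z‖ ≤ s) {t : ℂ}
    (ht : ‖t‖ ≤ 1) : ‖f z - f (t • z)‖ ≤ s * C / (ρ - s) * ‖1 - t‖ := by
  set δ := (ρ - s) / s
  have hδ : 0 < δ := div_pos (sub_pos.2 hsρ) hs
  have hK : ∀ u ∈ segment ℝ t 1, closedBall u δ ⊆ (· • z) ⁻¹' closedBall 0 ρ := by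
    intro u hu w hw
    have hu1 : ‖u‖ ≤ 1 := mem_closedBall_zero_iff.1 <|
      (convex_closedBall 0 1).segment_subset (by simpa using ht) (by simp) hu
    have hw1 : ‖w‖ ≤ 1 + δ := by
      have := norm_le_norm_add_norm_sub' w u
      rw [mem_closedBall, dist_eq_norm] at hw
      linarith
    rw [mem_preimage, mem_closedBall_zero_iff, norm_smul]
    calc ‖w‖ * ‖z‖ ≤ (1 + δ) * s := by gcongr
      _ = ρ := by rw [add_mul, one_mul, div_mul_cancel₀ _ hs.ne']; ring
  have hg : DifferentiableOn ℂ (fun u : ℂ => f (u • z)) ((· • z) ⁻¹' closedBall 0 ρ) :=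
    hf.comp (differentiable_id.smul_const z).differentiableOn fun _ hu => hu
  have key := norm_sub_le_of_differentiableOn_of_closedBall_subset hδ hK hg fun w hw => hC _ hw
  rw [one_smul] at key
  calc ‖f z - f (t • z)‖ ≤ C / δ * ‖1 - t‖ := key
    _ = s * C / (ρ - s) * ‖1 - t‖ := by rw [div_div_eq_mul_div, mul_comm C]

theorem stmt7 {n : ℕ} (r s : ℝ) (hr0 : 0 < r) (hr1 : r < 1) (hs0 : 0 < s) (hs1 : s < 1)
    (f : EuclideanSpace ℂ (Fin n) → ℂ)
    (hf : DifferentiableOn ℂ f (Metric.ball (0 : EuclideanSpace ℂ (Fin n)) 1))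
    (C : ℝ) (hC : ∀ w : EuclideanSpace ℂ (Fin n), ‖w‖ ≤ (1 + s) / 2 → ‖f w‖ ≤ C) :
    ∀ z : EuclideanSpace ℂ (Fin n), ‖z‖ ≤ s →
      ‖f z - f (r • z)‖ ≤ (2 * n * (1 - r) / (1 - s)) * C := by
  intro z hz
  rcases Nat.eq_zero_or_pos n with rfl | hn
  · simp [Subsingleton.elim (r • z) z]
  have hC0 : 0 ≤ C := (norm_nonneg _).trans (hC 0 (by rw [norm_zero]; linarith))
  have hr : ‖(r : ℂ)‖ ≤ 1 := by rw [Complex.norm_real, Real.norm_of_nonneg hr0.le]; exact hr1.le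
  have key := norm_sub_smul_le_of_differentiableOn_closedBall hs0 (by linarith)
    (hf.mono (closedBall_subset_ball (by linarith))) (fun w hw => hC w (mem_closedBall_zero_iff.1 hw))
    hz hr
  have h1r : ‖(1 : ℂ) - r‖ = 1 - r := by
    rw [← Complex.ofReal_one, ← Complex.ofReal_sub, Complex.norm_real,
      Real.norm_of_nonneg (by linarith)]
  have hn1 : (1 : ℝ) ≤ n := by exact_mod_cast hn
  rw [Complex.coe_smul, h1r] at key
  calc ‖f z - f (r • z)‖ ≤ s * C / ((1 + s) / 2 - s) * (1 - r) := key
    _ = 2 * s * (1 - r) / (1 - s) * C := by field_simp; ring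
    _ ≤ 2 * n * (1 - r) / (1 - s) * C := by gcongr; linarith
end

section
/- Let u be holomorphic on B_n, φ a holomorphic self-map of B_n, and suppose u ∈ B and M₂ := sup_{z ∈ B_n} (1-|z|²)|u(z)| sqrt(H_{φ(z)}(φ'(z)z, φ'(z)z)) < ∞, where H_w(v,v) = ((n+1)/2)((1-|w|²)|v|² + |⟨v,w⟩|²)/(1-|w|²)² is the Bergman metric. Then the weighted composition operator uC_φ : H^∞ → B is bounded, with ‖uC_φ f‖_B ≲ (‖u‖_B + M₂)‖f‖_∞. -/
/-!
The product rule gives `D(u · f ∘ φ)(z) z = u(z) Df(φ z)(φ'(z) z) + f(φ z) Du(z) z`: the second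
term is controlled by the Bloch bound on `u`, and the first by `M₂` once one knows the estimate
`‖Df(w) v‖ ≲ ‖f‖_∞ √(H_w(v, v))` for bounded holomorphic `f`. That estimate is the Cauchy estimate
on complex discs through `w`: in the direction of `w` the ball leaves room `1 - ‖w‖`, orthogonally
to `w` it leaves room `√(1 - ‖w‖²)`, and splitting `v` accordingly produces the two terms of `H_w`.
-/

/-- The Bergman metric `H_w(v,v)`; `inner w v` is the paper's `⟨v, w⟩`. -/
noncomputable def bergman {n : ℕ} (w v : EuclideanSpace ℂ (Fin n)) : ℝ :=
  ((n + 1 : ℝ) / 2) * ((1 - ‖w‖ ^ 2) * ‖v‖ ^ 2 + ‖(inner ℂ w v : ℂ)‖ ^ 2) / (1 - ‖w‖ ^ 2) ^ 2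

open Metric Set
open scoped InnerProductSpace

section CauchyEstimate

variable {E F G : Type*} [NormedAddCommGroup E] [NormedSpace ℂ E]
  [NormedAddCommGroup F] [NormedSpace ℂ F] [NormedAddCommGroup G] [NormedSpace ℂ G]
  {f : E → F} {U : Set E} {B ρ : ℝ} {w : E}

/-- The Cauchy estimate for `y ↦ f (w + L y)`, which maps `ball 0 ρ` into
`closedBall (f w) (2 * B)`. -/
theorem norm_fderiv_comp_le_of_forall_mem (hU : IsOpen U) (hf : DifferentiableOn ℂ f U)
    (hB : ∀ x ∈ U, ‖f x‖ ≤ B) (L : G →L[ℂ] E) (hρ : 0 < ρ)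
    (hL : ∀ y ∈ ball (0 : G) ρ, w + L y ∈ U) :
    ‖(fderiv ℂ f w).comp L‖ ≤ 2 * B / ρ := by
  have hw : w ∈ U := by simpa using hL 0 (mem_ball_self hρ)
  have hslice : ∀ y, HasFDerivAt (fun y => w + L y) L y := fun y =>
    L.hasFDerivAt.const_add w
  have hg : DifferentiableOn ℂ (fun y => f (w + L y)) (ball 0 ρ) := fun y hy =>
    ((hf.differentiableAt (hU.mem_nhds (hL y hy))).comp y (hslice y).differentiableAt)
      |>.differentiableWithinAt
  have hmaps : MapsTo (fun y => f (w + L y)) (ball 0 ρ) (closedBall (f (w + L 0)) (2 * B)) := by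
    intro y hy
    rw [mem_closedBall, dist_eq_norm, two_mul]
    exact (norm_sub_le _ _).trans (add_le_add (hB _ (hL y hy)) (hB _ (hL 0 (mem_ball_self hρ))))
  have hderiv : fderiv ℂ (fun y => f (w + L y)) 0 = (fderiv ℂ f w).comp L := by
    have hfw : HasFDerivAt f (fderiv ℂ f w) (w + L 0) := by
      simpa using (hf.differentiableAt (hU.mem_nhds hw)).hasFDerivAt
    exact (hfw.comp 0 (hslice 0)).fderiv
  rw [← hderiv]
  exact Complex.norm_fderiv_le_div_of_mapsTo_ball hg hmaps hρ

end CauchyEstimate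

section UnitBall

variable {E F : Type*} [NormedAddCommGroup E] [InnerProductSpace ℂ E]
  [NormedAddCommGroup F] [NormedSpace ℂ F] {f : E → F} {B : ℝ} {w : E}

theorem norm_mul_norm_starProjection_singleton (w v : E) :
    ‖w‖ * ‖(ℂ ∙ w).starProjection v‖ = ‖⟪w, v⟫_ℂ‖ := by
  rcases eq_or_ne w 0 with rfl | hw
  · simp
  rw [Submodule.starProjection_singleton, norm_smul, norm_div, RCLike.norm_ofReal,
    abs_of_nonneg (by positivity)]
  field_simp [norm_ne_zero_iff.mpr hw]

theorem one_sub_norm_mul_norm_fderiv_apply_le (hf : DifferentiableOn ℂ f (ball 0 1))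
    (hB : ∀ x ∈ ball 0 1, ‖f x‖ ≤ B) (hw : w ∈ ball 0 1) (x : E) :
    (1 - ‖w‖) * ‖fderiv ℂ f w x‖ ≤ 2 * B * ‖x‖ := by
  have hρ : 0 < 1 - ‖w‖ := sub_pos.mpr (mem_ball_zero_iff.mp hw)
  have hball : ∀ y ∈ ball (0 : E) (1 - ‖w‖), w + ContinuousLinearMap.id ℂ E y ∈ ball 0 1 := by
    intro y hy
    rw [mem_ball_zero_iff] at hy ⊢
    exact (norm_add_le _ _).trans_lt (by simp only [ContinuousLinearMap.id_apply]; linarith)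
  have h := norm_fderiv_comp_le_of_forall_mem isOpen_ball hf hB _ hρ hball
  rw [ContinuousLinearMap.comp_id, le_div_iff₀ hρ] at h
  calc (1 - ‖w‖) * ‖fderiv ℂ f w x‖ ≤ (1 - ‖w‖) * (‖fderiv ℂ f w‖ * ‖x‖) := by
        gcongr; exact (fderiv ℂ f w).le_opNorm x
    _ ≤ 2 * B * ‖x‖ := by nlinarith [norm_nonneg x]

theorem sqrt_mul_norm_fderiv_apply_le_of_mem_orthogonal (hf : DifferentiableOn ℂ f (ball 0 1))
    (hB : ∀ x ∈ ball 0 1, ‖f x‖ ≤ B) (hw : w ∈ ball 0 1) {x : E}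
    (hx : x ∈ (ℂ ∙ w)ᗮ) :
    √(1 - ‖w‖ ^ 2) * ‖fderiv ℂ f w x‖ ≤ 2 * B * ‖x‖ := by
  set K := (ℂ ∙ w)ᗮ
  have hw1 : ‖w‖ < 1 := mem_ball_zero_iff.mp hw
  have hρ : 0 < √(1 - ‖w‖ ^ 2) := Real.sqrt_pos.mpr (by nlinarith [norm_nonneg w])
  have hball : ∀ y ∈ ball (0 : K) √(1 - ‖w‖ ^ 2), w + K.subtypeL y ∈ ball 0 1 := by
    intro y hy
    rw [mem_ball_zero_iff] at hy ⊢
    have horth : ⟪w, (y : E)⟫_ℂ = 0 := Submodule.mem_orthogonal_singleton_iff_inner_right.mp y.2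
    have hy2 : ‖y‖ ^ 2 < 1 - ‖w‖ ^ 2 := by
      have := pow_lt_pow_left₀ hy (norm_nonneg _) two_ne_zero
      rwa [Real.sq_sqrt (by nlinarith [norm_nonneg w])] at this
    have hsq : ‖w + (y : E)‖ ^ 2 < 1 := by
      rw [sq, norm_add_sq_eq_norm_sq_add_norm_sq_of_inner_eq_zero _ _ horth]
      simp only [Submodule.norm_coe] at *
      nlinarith
    simpa using (sq_lt_one_iff₀ (norm_nonneg _)).mp hsq
  have h := norm_fderiv_comp_le_of_forall_mem isOpen_ball hf hB K.subtypeL hρ hball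
  rw [le_div_iff₀ hρ] at h
  calc √(1 - ‖w‖ ^ 2) * ‖fderiv ℂ f w x‖
      = √(1 - ‖w‖ ^ 2) * ‖(fderiv ℂ f w).comp K.subtypeL ⟨x, hx⟩‖ := rfl
    _ ≤ √(1 - ‖w‖ ^ 2) * (‖(fderiv ℂ f w).comp K.subtypeL‖ * ‖x‖) := by
        gcongr; exact ((fderiv ℂ f w).comp K.subtypeL).le_opNorm _
    _ ≤ 2 * B * ‖x‖ := by nlinarith [norm_nonneg x]

theorem one_sub_sq_mul_norm_fderiv_apply_le (hf : DifferentiableOn ℂ f (ball 0 1))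
    (hB : ∀ x ∈ ball 0 1, ‖f x‖ ≤ B) (hw : w ∈ ball 0 1) (v : E) :
    (1 - ‖w‖ ^ 2) * ‖fderiv ℂ f w v‖ ≤
      6 * B * √((1 - ‖w‖ ^ 2) * ‖v‖ ^ 2 + ‖⟪w, v⟫_ℂ‖ ^ 2) := by
  set K := ℂ ∙ w
  set a := K.starProjection v
  set b := Kᗮ.starProjection v
  set N := (1 - ‖w‖ ^ 2) * ‖v‖ ^ 2 + ‖⟪w, v⟫_ℂ‖ ^ 2
  have hw1 : ‖w‖ < 1 := mem_ball_zero_iff.mp hw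
  have hs : 0 < 1 - ‖w‖ ^ 2 := by nlinarith [norm_nonneg w]
  have hB0 : 0 ≤ B := (norm_nonneg _).trans (hB w hw)
  have hvab : v = a + b := (K.starProjection_add_starProjection_orthogonal v).symm
  have hpyth : ‖v‖ ^ 2 = ‖a‖ ^ 2 + ‖b‖ ^ 2 := K.norm_sq_eq_add_norm_sq_starProjection v
  have hwa : ‖w‖ * ‖a‖ = ‖⟪w, v⟫_ℂ‖ := norm_mul_norm_starProjection_singleton w v
  have ha : ‖a‖ ≤ √N := Real.le_sqrt_of_sq_le <| by
    simp only [N]; rw [← hwa]; nlinarith [sq_nonneg ‖b‖]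
  have hb : √(1 - ‖w‖ ^ 2) * ‖b‖ ≤ √N := by
    rw [← Real.sqrt_sq (norm_nonneg b), ← Real.sqrt_mul hs.le]
    exact Real.sqrt_le_sqrt (by nlinarith [sq_nonneg ‖a‖, sq_nonneg ‖⟪w, v⟫_ℂ‖])
  have hFa := one_sub_norm_mul_norm_fderiv_apply_le hf hB hw a
  have hFb := sqrt_mul_norm_fderiv_apply_le_of_mem_orthogonal hf hB hw
    (Kᗮ.starProjection_apply_mem v)
  have hsqrt : √(1 - ‖w‖ ^ 2) * √(1 - ‖w‖ ^ 2) = 1 - ‖w‖ ^ 2 := Real.mul_self_sqrt hs.le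
  calc (1 - ‖w‖ ^ 2) * ‖fderiv ℂ f w v‖
      ≤ (1 - ‖w‖ ^ 2) * (‖fderiv ℂ f w a‖ + ‖fderiv ℂ f w b‖) := by
        gcongr; rw [hvab, map_add]; exact norm_add_le _ _
    _ = (1 + ‖w‖) * ((1 - ‖w‖) * ‖fderiv ℂ f w a‖) +
          √(1 - ‖w‖ ^ 2) * (√(1 - ‖w‖ ^ 2) * ‖fderiv ℂ f w b‖) := by
        rw [← mul_assoc _ _ ‖fderiv ℂ f w b‖, hsqrt]; ring
    _ ≤ 2 * (2 * B * ‖a‖) + √(1 - ‖w‖ ^ 2) * (2 * B * ‖b‖) := by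
        have hFa0 : 0 ≤ (1 - ‖w‖) * ‖fderiv ℂ f w a‖ := by
          have := norm_nonneg (fderiv ℂ f w a); nlinarith
        gcongr
        linarith
    _ ≤ 6 * B * √N := by nlinarith

end UnitBall

theorem norm_fderiv_mul_comp_apply_le {𝕜 E G : Type*} [NontriviallyNormedField 𝕜]
    [NormedAddCommGroup E] [NormedSpace 𝕜 E] [NormedAddCommGroup G] [NormedSpace 𝕜 G]
    {u : E → 𝕜} {φ : E → G} {f : G → 𝕜} {z : E} (hu : DifferentiableAt 𝕜 u z)
    (hφ : DifferentiableAt 𝕜 φ z) (hf : DifferentiableAt 𝕜 f (φ z)) (v : E) :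
    ‖fderiv 𝕜 (fun w => u w * f (φ w)) z v‖ ≤
      ‖u z‖ * ‖fderiv 𝕜 f (φ z) (fderiv 𝕜 φ z v)‖ + ‖f (φ z)‖ * ‖fderiv 𝕜 u z v‖ := by
  have hd : HasFDerivAt (fun w => u w * f (φ w))
      (u z • (fderiv 𝕜 f (φ z)).comp (fderiv 𝕜 φ z) + f (φ z) • fderiv 𝕜 u z) z :=
    hu.hasFDerivAt.mul (hf.hasFDerivAt.comp z hφ.hasFDerivAt)
  rw [hd.fderiv]
  simp only [add_apply, smul_apply, ContinuousLinearMap.comp_apply, smul_eq_mul, ← norm_mul]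
  exact norm_add_le _ _

theorem sqrt_le_two_mul_sqrt_bergman {n : ℕ} {w : EuclideanSpace ℂ (Fin n)} (hw : ‖w‖ < 1)
    (v : EuclideanSpace ℂ (Fin n)) :
    √((1 - ‖w‖ ^ 2) * ‖v‖ ^ 2 + ‖⟪w, v⟫_ℂ‖ ^ 2) ≤ 2 * (1 - ‖w‖ ^ 2) * √(bergman w v) := by
  have hs : 0 < 1 - ‖w‖ ^ 2 := by nlinarith [norm_nonneg w]
  calc √((1 - ‖w‖ ^ 2) * ‖v‖ ^ 2 + ‖⟪w, v⟫_ℂ‖ ^ 2)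
      ≤ √(2 * (n + 1) * ((1 - ‖w‖ ^ 2) * ‖v‖ ^ 2 + ‖⟪w, v⟫_ℂ‖ ^ 2)) :=
        Real.sqrt_le_sqrt <| le_mul_of_one_le_left (by positivity) <| by
          linarith [(Nat.cast_nonneg n : (0 : ℝ) ≤ n)]
    _ = √((2 * (1 - ‖w‖ ^ 2)) ^ 2 * bergman w v) := by
        unfold bergman; field_simp
    _ = 2 * (1 - ‖w‖ ^ 2) * √(bergman w v) := by
        rw [Real.sqrt_mul (sq_nonneg _), Real.sqrt_sq (by positivity)]

theorem norm_fderiv_apply_le_mul_sqrt_bergman {n : ℕ} {f : EuclideanSpace ℂ (Fin n) → ℂ} {B : ℝ}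
    (hf : DifferentiableOn ℂ f (ball 0 1)) (hB : ∀ x ∈ ball 0 1, ‖f x‖ ≤ B)
    {w : EuclideanSpace ℂ (Fin n)} (hw : w ∈ ball 0 1) (v : EuclideanSpace ℂ (Fin n)) :
    ‖fderiv ℂ f w v‖ ≤ 12 * B * √(bergman w v) := by
  have hw1 : ‖w‖ < 1 := mem_ball_zero_iff.mp hw
  have hs : 0 < 1 - ‖w‖ ^ 2 := by nlinarith [norm_nonneg w]
  have hB0 : 0 ≤ B := (norm_nonneg _).trans (hB w hw)
  refine le_of_mul_le_mul_left ?_ hs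
  calc (1 - ‖w‖ ^ 2) * ‖fderiv ℂ f w v‖
      ≤ 6 * B * √((1 - ‖w‖ ^ 2) * ‖v‖ ^ 2 + ‖⟪w, v⟫_ℂ‖ ^ 2) :=
        one_sub_sq_mul_norm_fderiv_apply_le hf hB hw v
    _ ≤ 6 * B * (2 * (1 - ‖w‖ ^ 2) * √(bergman w v)) := by
        gcongr; exact sqrt_le_two_mul_sqrt_bergman hw1 v
    _ = (1 - ‖w‖ ^ 2) * (12 * B * √(bergman w v)) := by ring

/-- If `u ∈ B` (with Bloch norm bound `Nu`) and
`M₂ = sup_z (1-|z|²)|u(z)| √(H_{φ(z)}(φ'(z)z, φ'(z)z)) < ∞`, then `uC_φ : H^∞ → B`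
is bounded, with `‖uC_φ f‖_B ≲ (Nu + M₂)‖f‖_∞` (constant depending only on `n`). -/
theorem stmt16 (n : ℕ) :
    ∃ C : ℝ, 0 < C ∧
      ∀ (u : EuclideanSpace ℂ (Fin n) → ℂ)
        (φ : EuclideanSpace ℂ (Fin n) → EuclideanSpace ℂ (Fin n)),
        DifferentiableOn ℂ u (Metric.ball (0 : EuclideanSpace ℂ (Fin n)) 1) →
        DifferentiableOn ℂ φ (Metric.ball (0 : EuclideanSpace ℂ (Fin n)) 1) →
        (∀ z ∈ Metric.ball (0 : EuclideanSpace ℂ (Fin n)) 1,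
          φ z ∈ Metric.ball (0 : EuclideanSpace ℂ (Fin n)) 1) →
        ∀ Nu : ℝ, (∀ z ∈ Metric.ball (0 : EuclideanSpace ℂ (Fin n)) 1,
          ‖u 0‖ + (1 - ‖z‖ ^ 2) * ‖fderiv ℂ u z z‖ ≤ Nu) →
        ∀ M₂ : ℝ, (∀ z ∈ Metric.ball (0 : EuclideanSpace ℂ (Fin n)) 1,
          (1 - ‖z‖ ^ 2) * ‖u z‖ * Real.sqrt (bergman (φ z) (fderiv ℂ φ z z)) ≤ M₂) →
        ∀ (f : EuclideanSpace ℂ (Fin n) → ℂ) (B : ℝ),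
          DifferentiableOn ℂ f (Metric.ball (0 : EuclideanSpace ℂ (Fin n)) 1) →
          (∀ z ∈ Metric.ball (0 : EuclideanSpace ℂ (Fin n)) 1, ‖f z‖ ≤ B) →
          ∀ z ∈ Metric.ball (0 : EuclideanSpace ℂ (Fin n)) 1,
            ‖u 0 * f (φ 0)‖ + (1 - ‖z‖ ^ 2) * ‖fderiv ℂ (fun w => u w * f (φ w)) z z‖ ≤
              C * ((Nu + M₂) * B) := by
  refine ⟨12, by norm_num, fun u φ hu hφ hφB Nu hNu M₂ hM₂ f B hf hB z hz => ?_⟩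
  have h0 : (0 : EuclideanSpace ℂ (Fin n)) ∈ ball 0 1 := mem_ball_self one_pos
  have hB0 : 0 ≤ B := (norm_nonneg _).trans (hB _ (hφB 0 h0))
  have hNu0 : 0 ≤ Nu := by
    have := hNu 0 h0
    simp only [norm_zero, map_zero] at this
    linarith [norm_nonneg (u 0)]
  have hs : 0 ≤ 1 - ‖z‖ ^ 2 := by nlinarith [norm_nonneg z, mem_ball_zero_iff.mp hz]
  have hprod := norm_fderiv_mul_comp_apply_le (hu.differentiableAt (isOpen_ball.mem_nhds hz))
    (hφ.differentiableAt (isOpen_ball.mem_nhds hz))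
    (hf.differentiableAt (isOpen_ball.mem_nhds (hφB z hz))) z
  have hfφ := norm_fderiv_apply_le_mul_sqrt_bergman hf hB (hφB z hz) (fderiv ℂ φ z z)
  calc ‖u 0 * f (φ 0)‖ + (1 - ‖z‖ ^ 2) * ‖fderiv ℂ (fun w => u w * f (φ w)) z z‖
      ≤ ‖u 0‖ * B + (1 - ‖z‖ ^ 2) *
          (‖u z‖ * (12 * B * √(bergman (φ z) (fderiv ℂ φ z z))) + B * ‖fderiv ℂ u z z‖) := by
        rw [norm_mul]
        gcongr
        · exact hB _ (hφB 0 h0)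
        · exact hprod.trans (add_le_add (mul_le_mul_of_nonneg_left hfφ (norm_nonneg _))
            (mul_le_mul_of_nonneg_right (hB _ (hφB z hz)) (norm_nonneg _)))
    _ = B * (‖u 0‖ + (1 - ‖z‖ ^ 2) * ‖fderiv ℂ u z z‖) +
          12 * B * ((1 - ‖z‖ ^ 2) * ‖u z‖ * √(bergman (φ z) (fderiv ℂ φ z z))) := by ring
    _ ≤ B * Nu + 12 * B * M₂ := by gcongr; exacts [hNu z hz, hM₂ z hz]
    _ ≤ 12 * ((Nu + M₂) * B) := by nlinarith
end
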